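/- For all χ∈F, the element p(χ) − (−1)^{|χ|}∏_{a∈A}(h⊗a)^{(χ(a))} of U(sl₂⊗A) is a ℂ-linear combination of products of fewer than |χ| elements of the set {h⊗a : a∈A}; that is, p(χ) = (−1)^{|χ|}∏_{a∈A}(h⊗a)^{(χ(a))} plus an element of the subalgebra generated by {h⊗a : a∈A} of degree less than |χ|. -/

import Mathlib

open scoped TensorProduct
open Finsupp
open scoped Classical

noncomputable section

namespace MapAlgebra

/-- the divided power `u^{(r)} = u^r / r!` in a `ℂ`-algebra. -/
def dp {S : Type*} [Ring S] [Algebra ℂ S] (u : S) (r : ℕ) : S :=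
  (r.factorial : ℂ)⁻¹ • u ^ r

variable {A : Type*} [CommRing A] [Algebra ℂ A]

/-- `|ψ| = Σ_a ψ(a)` for a multiset `ψ` of elements of `A`. -/
def wt (ψ : A →₀ ℕ) : ℕ := ψ.sum fun _ n => n

/-- `π(ψ) = ∏_a a^{ψ(a)}`. -/
def piF (ψ : A →₀ ℕ) : A := ψ.prod fun a n => a ^ n

/-- `m(ψ) = |ψ|! / ∏_a ψ(a)!`. -/
def mF (ψ : A →₀ ℕ) : ℕ := Finsupp.multinomial ψ

variable {L : Type*} [LieRing L] [LieAlgebra ℂ L]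

instance : LieAlgebra ℂ (A ⊗[ℂ] L) where
  lie_smul c x y := by
    rw [← algebraMap_smul A c y, lie_smul, algebraMap_smul]

/-- The universal enveloping algebra `U(L ⊗ A)` of the map algebra `L ⊗ A`
(realized as `A ⊗[ℂ] L` with bracket `[a ⊗ z, b ⊗ z'] = ab ⊗ [z,z']`). -/
abbrev UEA (A : Type*) [CommRing A] [Algebra ℂ A]
    (L : Type*) [LieRing L] [LieAlgebra ℂ L] : Type _ :=
  UniversalEnvelopingAlgebra ℂ (A ⊗[ℂ] L)

/-- The element `v ⊗ a` of the map algebra, viewed inside `U(L ⊗ A)`. -/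
def el (a : A) (v : L) : UEA A L :=
  UniversalEnvelopingAlgebra.ι ℂ (a ⊗ₜ[ℂ] v)

lemma commute_el (a b : A) (v : L) : Commute (el a v : UEA A L) (el b v) := by
  letI : LieRing (UEA A L) := LieRing.ofAssociativeRing
  letI : LieAlgebra ℂ (UEA A L) := LieAlgebra.ofAssociativeAlgebra
  have h := (UniversalEnvelopingAlgebra.ι ℂ).map_lie (a ⊗ₜ[ℂ] v) (b ⊗ₜ[ℂ] v)
  rw [LieAlgebra.ExtendScalars.bracket_tmul, lie_self, TensorProduct.tmul_zero, map_zero,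
    Ring.lie_def] at h
  exact (sub_eq_zero.mp h.symm)

lemma commute_dp {S : Type*} [Ring S] [Algebra ℂ S] {u w : S} (h : Commute u w)
    (r s : ℕ) : Commute (dp u r) (dp w s) :=
  ((h.pow_pow r s).smul_left _).smul_right _

/-- `x^±(ψ) = ∏_a (x^± ⊗ a)^{(ψ(a))}` (generic in the element `v` of `L`);
the factors pairwise commute, so the product is unambiguous. -/
def xProd (v : L) (ψ : A →₀ ℕ) : UEA A L :=
  ψ.support.noncommProd (fun a => dp (el a v) (ψ a))
    (fun a _ b _ _ => commute_dp (commute_el a b v) _ _)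

/-- the predicate characterizing the recursively defined family
`p : F × F → U(L ⊗ A)` (relative to a choice `v` playing the role of `h`). -/
def IsP (v : L) (p : (A →₀ ℕ) → (A →₀ ℕ) → UEA A L) : Prop :=
  p 0 0 = 1 ∧
  (∀ φ χ, wt φ ≠ wt χ → p φ χ = 0) ∧
  (∀ φ χ, φ ≠ 0 → χ ≠ 0 → wt φ = wt χ →
    p φ χ = -((wt φ : ℂ)⁻¹) •
      ∑ ψ₁ ∈ (Finset.Iic φ).erase 0, ∑ ψ₂ ∈ (Finset.Iic χ).erase 0,
        ((mF ψ₁ * mF ψ₂ : ℕ) : ℂ) • (el (piF ψ₁ * piF ψ₂) v * p (φ - ψ₁) (χ - ψ₂)))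

/-- `p(χ) = p(χ, |χ|·χ₁)`. -/
def pOne (p : (A →₀ ℕ) → (A →₀ ℕ) → UEA A L) (χ : A →₀ ℕ) : UEA A L :=
  p χ (Finsupp.single (1 : A) (wt χ))

/-- the predicate characterizing the recursively defined family
`D^± : F³ → U(L ⊗ A)` (relative to a choice `v` playing the role of `x^±`). -/
def IsD (v : L) (D : (A →₀ ℕ) → (A →₀ ℕ) → (A →₀ ℕ) → UEA A L) : Prop :=
  (D 0 0 0 = 1) ∧
  (∀ ψ₁ ψ₂ : A →₀ ℕ, ¬(ψ₁ = 0 ∧ ψ₂ = 0) → D ψ₁ ψ₂ 0 = 0) ∧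
  (∀ (ψ₁ ψ₂ : A →₀ ℕ) (b : A), D ψ₁ ψ₂ (Finsupp.single b 1) =
      if wt ψ₁ = wt ψ₂ then ((mF ψ₁ * mF ψ₂ : ℕ) : ℂ) • el (b * (piF ψ₁ * piF ψ₂)) v
      else 0) ∧
  (∀ ψ₁ ψ₂ ψ₃ : A →₀ ℕ, 2 ≤ wt ψ₃ →
    D ψ₁ ψ₂ ψ₃ = (wt ψ₃ : ℂ)⁻¹ •
      ∑ φ₁ ∈ Finset.Iic ψ₁, ∑ φ₂ ∈ Finset.Iic ψ₂, ∑ b ∈ ψ₃.support,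
        D φ₁ φ₂ (Finsupp.single b 1) *
          D (ψ₁ - φ₁) (ψ₂ - φ₂) (ψ₃ - Finsupp.single b 1))

/-- `𝔻(ψ₁,ψ₂,ψ₃) = Σ_{φ₁≤ψ₁} Σ_{φ₂≤ψ₂} p(φ₁,φ₂) D⁺(ψ₁−φ₁,ψ₂−φ₂,ψ₃)`. -/
def DD (p : (A →₀ ℕ) → (A →₀ ℕ) → UEA A L)
    (Dp : (A →₀ ℕ) → (A →₀ ℕ) → (A →₀ ℕ) → UEA A L)
    (ψ₁ ψ₂ ψ₃ : A →₀ ℕ) : UEA A L :=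
  ∑ φ₁ ∈ Finset.Iic ψ₁, ∑ φ₂ ∈ Finset.Iic ψ₂,
    p φ₁ φ₂ * Dp (ψ₁ - φ₁) (ψ₂ - φ₂) ψ₃

/-- the Lie algebra `sl₂` presented by a basis `x⁻ = b 0`, `h = b 1`, `x⁺ = b 2`
with `[h,x^±] = ±2x^±`, `[x⁺,x⁻] = h`. -/
structure Sl2Data (L : Type*) [LieRing L] [LieAlgebra ℂ L] where
  b : Module.Basis (Fin 3) ℂ L
  lie_h_xp : ⁅b 1, b 2⁆ = (2 : ℂ) • b 2
  lie_h_xm : ⁅b 1, b 0⁆ = (-2 : ℂ) • b 0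
  lie_xp_xm : ⁅b 2, b 0⁆ = b 1

/-- `x⁻`. -/
def Sl2Data.xm (S : Sl2Data L) : L := S.b 0
/-- `h`. -/
def Sl2Data.h (S : Sl2Data L) : L := S.b 1
/-- `x⁺`. -/
def Sl2Data.xp (S : Sl2Data L) : L := S.b 2

/-- The data of a root system and Chevalley basis for a (finite-dimensional simple)
complex Lie algebra `g`: a Cartan subalgebra `H`, the roots `R`, the positive roots
`Rpos` enumerated as `β 0, …, β (m-1)`, simple roots `α 0, …, α (n-1)`, root vectors
`x s γ` (`s = true` for `x_γ⁺`, `s = false` for `x_γ⁻`), coroots, integral Cartan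
pairing, and structure constants `±(p+1)`. -/
structure ChevalleyData (g : Type*) [LieRing g] [LieAlgebra ℂ g] where
  n : ℕ
  m : ℕ
  H : LieSubalgebra ℂ g
  cartan : H.IsCartanSubalgebra
  R : Set (Module.Dual ℂ H)
  Rpos : Set (Module.Dual ℂ H)
  β : Fin m → Module.Dual ℂ H
  β_inj : Function.Injective β
  Rpos_eq : Rpos = Set.range β
  α : Fin n → Module.Dual ℂ H
  α_mem : ∀ i, α i ∈ Rpos
  R_eq : R = Rpos ∪ (fun γ => -γ) '' Rpos
  x : Bool → Module.Dual ℂ H → g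
  coroot : Module.Dual ℂ H → H
  chevBasis : Module.Basis ((Fin m × Bool) ⊕ Fin n) ℂ g
  chevBasis_x : ∀ (k : Fin m) (s : Bool), chevBasis (Sum.inl (k, s)) = x s (β k)
  chevBasis_h : ∀ i : Fin n, chevBasis (Sum.inr i) = (coroot (α i) : g)
  rootvec_pos : ∀ γ ∈ Rpos, ∀ t : H, ⁅(t : g), x true γ⁆ = γ t • x true γ
  rootvec_neg : ∀ γ ∈ Rpos, ∀ t : H, ⁅(t : g), x false γ⁆ = -(γ t) • x false γ
  coroot_def : ∀ γ ∈ Rpos, ⁅x true γ, x false γ⁆ = (coroot γ : g)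
  pairing : Module.Dual ℂ H → Module.Dual ℂ H → ℤ
  pairing_eq : ∀ γ ∈ Rpos, ∀ δ ∈ R, δ (coroot γ) = (pairing γ δ : ℂ)
  pairing_self : ∀ γ ∈ Rpos, pairing γ γ = 2
  struct : ∀ γ δ, γ ∈ Rpos → δ ∈ Rpos → γ + δ ∈ R → ∃ (c : ℤ) (pm : ℕ),
    (δ - (pm : ℤ) • γ ∈ R) ∧ (∀ q : ℕ, δ - (q : ℤ) • γ ∈ R → q ≤ pm) ∧
    (c = pm + 1 ∨ c = -(pm + 1)) ∧
    ⁅x true γ, x true δ⁆ = (c : ℂ) • x true (γ + δ) ∧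
    ⁅x false γ, x false δ⁆ = (-c : ℂ) • x false (γ + δ)

/-- `ψ ∈ F(𝔹)`: the multiset `ψ` is supported on the basis `𝔹 = range bA` of `A`. -/
def SuppB {ιA : Type*} (bA : Module.Basis ιA ℂ A) (ψ : A →₀ ℕ) : Prop :=
  ∀ a ∈ ψ.support, a ∈ Set.range bA

variable {g : Type*} [LieRing g] [LieAlgebra ℂ g]

/-- The integral form `U_ℤ(g ⊗ A)`: the `ℤ`-subalgebra of `U(g ⊗ A)` generated by all
divided powers `(x_α^± ⊗ b)^{(r)}`, `α ∈ R⁺`, `b ∈ 𝔹`, `r ∈ ℕ`. -/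
def UZ (C : ChevalleyData g) {ιA : Type*} (bA : Module.Basis ιA ℂ A) : Subalgebra ℤ (UEA A g) :=
  Algebra.adjoin ℤ {u : UEA A g | ∃ (k : Fin C.m) (s : Bool) (i : ιA) (r : ℕ),
    u = dp (el (bA i) (C.x s (C.β k))) r}

/-- `U_ℤ^±(g ⊗ A)` (one sign `s` only). -/
def UZpm (C : ChevalleyData g) {ιA : Type*} (bA : Module.Basis ιA ℂ A) (s : Bool) :
    Subalgebra ℤ (UEA A g) :=
  Algebra.adjoin ℤ {u : UEA A g | ∃ (k : Fin C.m) (i : ιA) (r : ℕ),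
    u = dp (el (bA i) (C.x s (C.β k))) r}


/-- generalized binomial coefficient `C(z,k) = z(z-1)⋯(z-k+1)/k!` (as a complex scalar). -/
def cchoose (z : ℂ) (k : ℕ) : ℂ :=
  (k.factorial : ℂ)⁻¹ * ∏ j ∈ Finset.range k, (z - (j : ℂ))

/-- the (finite) set `P_k(ψ)` of partitions of `ψ` into `k` parts,
i.e. finitely supported `χ : F → ℕ` with `Σ_φ χ(φ)·φ = ψ` and `Σ_φ χ(φ) = k`. -/
def partitions (ψ : A →₀ ℕ) (k : ℕ) : Finset ((A →₀ ℕ) →₀ ℕ) :=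
  (Finset.Iic ((Finset.Iic ψ).sum fun φ => Finsupp.single φ k)).filter
    (fun χ => (χ.sum fun φ c => c • φ) = ψ ∧ (χ.sum fun _ c => c) = k)

/-- the (finite) set `S_k(χ)` of finitely supported `ψ : F → ℕ` with
`Σ_φ ψ(φ)·φ ≤ χ` and `Σ_φ ψ(φ) = k`. -/
def subPartitions (χ : A →₀ ℕ) (k : ℕ) : Finset ((A →₀ ℕ) →₀ ℕ) :=
  (Finset.Iic ((Finset.Iic χ).sum fun φ => Finsupp.single φ k)).filter
    (fun ψ => (ψ.sum fun φ c => c • φ) ≤ χ ∧ (ψ.sum fun _ c => c) = k)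

/-- `U_ℤ^0(g ⊗ A)`: the `ℤ`-subalgebra generated by the `p_i(χ)`, `χ ∈ F(𝔹)`,
where `P i` is the family `p_i` (defined by recursion relative to `h_{α_i}`). -/
def UZ0 (C : ChevalleyData g) {ιA : Type*} (bA : Module.Basis ιA ℂ A)
    (P : Fin C.n → (A →₀ ℕ) → (A →₀ ℕ) → UEA A g) : Subalgebra ℤ (UEA A g) :=
  Algebra.adjoin ℤ {u : UEA A g | ∃ (i : Fin C.n) (χ : A →₀ ℕ), SuppB bA χ ∧ u = pOne (P i) χ}


/-! Specialised to `χ₂ = |χ|χ₁`, the recursion for `p` keeps only the inner term `ψ₂ = |ψ₁|χ₁`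
(the others vanish for weight reasons), so
`p(χ) = -(1/|χ|) Σ_{0 ≠ ψ ≤ χ} m(ψ) (h ⊗ π(ψ)) p(χ - ψ)`.
Hence `p(χ)` is a combination of products of at most `|χ|` elements `h ⊗ a`, and modulo products
of fewer than `|χ|` of them only the terms with `|ψ| = 1` survive. Writing
`H(χ) = ∏_a (h ⊗ a)^{(χ(a))}`, induction gives
`(h ⊗ a) p(χ - χ_a) ≡ (-1)^{|χ|-1} (h ⊗ a) H(χ - χ_a) = (-1)^{|χ|-1} χ(a) H(χ)`,
and `Σ_a χ(a) = |χ|` cancels the factor `1/|χ|`. -/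

section Degree

variable (v : L)

def degreeLE (n : ℕ) : Submodule ℂ (UEA A L) :=
  Submodule.span ℂ {u | ∃ l : List A, l.length ≤ n ∧ u = (l.map fun a => el a v).prod}

def degreeLT (n : ℕ) : Submodule ℂ (UEA A L) :=
  Submodule.span ℂ {u | ∃ l : List A, l.length < n ∧ u = (l.map fun a => el a v).prod}

variable {v}

lemma degreeLE_mono {m n : ℕ} (h : m ≤ n) : degreeLE (A := A) v m ≤ degreeLE v n :=
  Submodule.span_mono fun _ ⟨l, hl, hu⟩ => ⟨l, hl.trans h, hu⟩

lemma degreeLE_le_degreeLT {m n : ℕ} (h : m < n) : degreeLE (A := A) v m ≤ degreeLT v n :=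
  Submodule.span_mono fun _ ⟨l, hl, hu⟩ => ⟨l, hl.trans_lt h, hu⟩

lemma one_mem_degreeLE (n : ℕ) : (1 : UEA A L) ∈ degreeLE v n :=
  Submodule.subset_span ⟨[], by simp, by simp⟩

lemma el_mem_degreeLE_one (a : A) : el a v ∈ degreeLE v 1 :=
  Submodule.subset_span ⟨[a], by simp, by simp⟩

lemma mul_mem_degreeLT {x y : UEA A L} {m n : ℕ} (hx : x ∈ degreeLE v m)
    (hy : y ∈ degreeLT v n) : x * y ∈ degreeLT v (m + n) := by
  have h := Submodule.mul_mem_mul hx hy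
  rw [degreeLE, degreeLT, Submodule.span_mul_span] at h
  refine Submodule.span_le.mpr ?_ h
  rintro _ ⟨_, ⟨l₁, hl₁, rfl⟩, _, ⟨l₂, hl₂, rfl⟩, rfl⟩
  exact Submodule.subset_span ⟨l₁ ++ l₂, by simp; omega, by simp⟩

lemma mul_smodEq_degreeLT {x y z : UEA A L} {m n : ℕ} (hz : z ∈ degreeLE v m)
    (h : x ≡ y [SMOD degreeLT v n]) : z * x ≡ z * y [SMOD degreeLT v (m + n)] := by
  rw [SModEq.sub_mem, ← mul_sub]
  exact mul_mem_degreeLT hz (SModEq.sub_mem.mp h)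

lemma degreeLT_succ (n : ℕ) : degreeLT (A := A) v (n + 1) = degreeLE v n := by
  simp only [degreeLT, degreeLE, Nat.lt_succ_iff]

lemma mul_mem_degreeLE {x y : UEA A L} {m n : ℕ} (hx : x ∈ degreeLE v m)
    (hy : y ∈ degreeLE v n) : x * y ∈ degreeLE v (m + n) := by
  rw [← degreeLT_succ] at hy ⊢
  exact mul_mem_degreeLT (n := n + 1) hx hy

end Degree

section Weight

lemma wt_eq_degree (ψ : A →₀ ℕ) : wt ψ = ψ.degree := rfl

lemma wt_single (a : A) (n : ℕ) : wt (Finsupp.single a n) = n :=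
  Finsupp.degree_single a n

lemma wt_eq_zero {ψ : A →₀ ℕ} : wt ψ = 0 ↔ ψ = 0 :=
  Finsupp.degree_eq_zero_iff ψ

lemma wt_tsub {ψ χ : A →₀ ℕ} (h : ψ ≤ χ) : wt (χ - ψ) = wt χ - wt ψ := by
  have := map_add Finsupp.degree ψ (χ - ψ)
  rw [add_tsub_cancel_of_le h] at this
  simp only [wt_eq_degree]
  omega

lemma wt_mono {ψ χ : A →₀ ℕ} (h : ψ ≤ χ) : wt ψ ≤ wt χ :=
  Finsupp.degree_mono h

lemma eq_single_of_le_single {α : Type*} {ψ : α →₀ ℕ} {a : α} {n : ℕ}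
    (h : ψ ≤ Finsupp.single a n) :
    ψ = Finsupp.single a (ψ a) := by
  ext b
  by_cases hb : b = a
  · subst hb; rw [Finsupp.single_eq_same]
  · simpa [Finsupp.single_eq_of_ne hb] using h b

lemma eq_single_of_wt_eq_one {ψ : A →₀ ℕ} (h : wt ψ = 1) : ∃ a, ψ = Finsupp.single a 1 := by
  obtain ⟨a, ha⟩ : ∃ a, ψ a ≠ 0 := by
    by_contra! h0
    have := wt_eq_zero.mpr (Finsupp.ext h0)
    omega
  have hle : Finsupp.single a 1 ≤ ψ := Finsupp.single_le_iff.mpr (Nat.one_le_iff_ne_zero.mpr ha)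
  refine ⟨a, le_antisymm (tsub_eq_zero_iff_le.mp (wt_eq_zero.mp ?_)) hle⟩
  rw [wt_tsub hle, wt_single, h]

lemma sum_filter_wt_eq_one {M : Type*} [AddCommMonoid M] (χ : A →₀ ℕ) (g : (A →₀ ℕ) → M) :
    ∑ ψ ∈ ((Finset.Iic χ).erase 0).filter (wt · = 1), g ψ =
      ∑ a ∈ χ.support, g (Finsupp.single a 1) := by
  have himage : ((Finset.Iic χ).erase 0).filter (wt · = 1) =
      χ.support.image (Finsupp.single · 1) := by
    ext ψ
    simp only [Finset.mem_filter, Finset.mem_erase, Finset.mem_Iic, Finset.mem_image,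
      Finsupp.mem_support_iff]
    constructor
    · rintro ⟨⟨-, hle⟩, hwt⟩
      obtain ⟨a, rfl⟩ := eq_single_of_wt_eq_one hwt
      exact ⟨a, by simpa [Nat.one_le_iff_ne_zero] using Finsupp.single_le_iff.mp hle, rfl⟩
    · rintro ⟨a, ha, rfl⟩
      exact ⟨⟨by simp, Finsupp.single_le_iff.mpr (Nat.one_le_iff_ne_zero.mpr ha)⟩, wt_single a 1⟩
  rw [himage, Finset.sum_image fun a _ b _ h => Finsupp.single_left_injective one_ne_zero h]

lemma mF_single (a : A) (n : ℕ) : mF (Finsupp.single a n) = 1 := by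
  rw [mF, Finsupp.multinomial_eq_of_support_subset Finsupp.support_single_subset,
    Nat.multinomial_singleton]

lemma piF_single (a : A) (n : ℕ) : piF (Finsupp.single a n) = a ^ n :=
  Finsupp.prod_single_index (pow_zero a)

end Weight

section DividedPowers

lemma mul_dp {S : Type*} [Ring S] [Algebra ℂ S] (u : S) (k : ℕ) :
    u * dp u k = ((k + 1 : ℕ) : ℂ) • dp u (k + 1) := by
  have hk : ((k + 1 : ℕ) : ℂ) ≠ 0 := Nat.cast_ne_zero.mpr k.succ_ne_zero
  rw [dp, dp, mul_smul_comm, ← pow_succ', smul_smul, Nat.factorial_succ, Nat.cast_mul,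
    mul_inv, ← mul_assoc, mul_inv_cancel₀ hk, one_mul]

variable {v : L}

lemma xProd_eq_dp_mul (ψ : A →₀ ℕ) (a : A) :
    xProd v ψ = dp (el a v) (ψ a) *
      (ψ.support.erase a).noncommProd (fun b => dp (el b v) (ψ b))
        (fun b _ c _ _ => commute_dp (commute_el b c v) _ _) := by
  by_cases ha : a ∈ ψ.support
  · exact (Finset.mul_noncommProd_erase ψ.support ha _ _).symm
  · rw [Finset.erase_eq_of_notMem ha, Finsupp.notMem_support_iff.mp ha, dp, pow_zero,
      Nat.factorial_zero, Nat.cast_one, inv_one, one_smul, one_mul]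
    rfl

lemma el_mul_xProd_tsub_single {ψ : A →₀ ℕ} {a : A} (ha : a ∈ ψ.support) :
    el a v * xProd v (ψ - Finsupp.single a 1) = (ψ a : ℂ) • xProd v ψ := by
  set ψ' := ψ - Finsupp.single a 1
  have hoff : ∀ b, b ≠ a → ψ' b = ψ b := fun b hb => by
    simp [ψ', Finsupp.single_eq_of_ne hb]
  obtain ⟨k, hk⟩ : ∃ k, ψ a = k + 1 :=
    Nat.exists_eq_succ_of_ne_zero (Finsupp.mem_support_iff.mp ha)
  have ha' : ψ' a = k := by simp [ψ', hk]
  have hsupp : ψ'.support.erase a = ψ.support.erase a := by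
    ext b
    by_cases hb : b = a
    · simp [hb]
    · simp [hb, hoff b hb]
  rw [xProd_eq_dp_mul ψ' a, xProd_eq_dp_mul ψ a, ← mul_assoc, ha', mul_dp, hk, smul_mul_assoc]
  congr 2
  exact Finset.noncommProd_congr hsupp (fun b hb => by
    rw [hoff b (Finset.ne_of_mem_erase (hsupp ▸ hb))]) _

end DividedPowers

section Recursion

variable {v : L} {p : (A →₀ ℕ) → (A →₀ ℕ) → UEA A L}

lemma xProd_zero : xProd v (0 : A →₀ ℕ) = 1 := by
  simp [xProd]

lemma IsP.pOne_zero (hp : IsP v p) : pOne p 0 = 1 := by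
  rw [pOne, wt_eq_zero.mpr rfl, Finsupp.single_zero]
  exact hp.1

lemma IsP.sum_Iic_single_one_eq (hp : IsP v p) {χ ψ : A →₀ ℕ} (hψ : ψ ≤ χ) (hψ0 : ψ ≠ 0) :
    ∑ ψ₂ ∈ (Finset.Iic (Finsupp.single (1 : A) (wt χ))).erase 0,
      ((mF ψ * mF ψ₂ : ℕ) : ℂ) •
        (el (piF ψ * piF ψ₂) v * p (χ - ψ) (Finsupp.single 1 (wt χ) - ψ₂)) =
      (mF ψ : ℂ) • (el (piF ψ) v * pOne p (χ - ψ)) := by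
  have hle : wt ψ ≤ wt χ := wt_mono hψ
  have hpos : wt ψ ≠ 0 := mt wt_eq_zero.mp hψ0
  rw [Finset.sum_eq_single_of_mem (Finsupp.single 1 (wt ψ))]
  · rw [mF_single, piF_single, one_pow, mul_one, mul_one, ← Finsupp.single_tsub, pOne,
      wt_tsub hψ]
  · simp [Finsupp.single_le_iff, hle, hpos]
  · intro ψ₂ hψ₂ hne
    rw [Finset.mem_erase, Finset.mem_Iic] at hψ₂
    have h₂ := eq_single_of_le_single hψ₂.2
    have hle₂ : ψ₂ 1 ≤ wt χ := by simpa using hψ₂.2 1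
    have hne₂ : ψ₂ 1 ≠ wt ψ := fun h => hne (h₂.trans (by rw [h]))
    have hwt : wt (χ - ψ) ≠ wt (Finsupp.single 1 (wt χ) - ψ₂) := by
      rw [wt_tsub hψ, h₂, ← Finsupp.single_tsub, wt_single]
      omega
    rw [hp.2.1 _ _ hwt, mul_zero, smul_zero]

lemma IsP.pOne_eq_sum (hp : IsP v p) {χ : A →₀ ℕ} (hχ : χ ≠ 0) :
    pOne p χ = -((wt χ : ℂ)⁻¹) • ∑ ψ ∈ (Finset.Iic χ).erase 0,
      (mF ψ : ℂ) • (el (piF ψ) v * pOne p (χ - ψ)) := by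
  rw [pOne, hp.2.2 χ _ hχ (Finsupp.single_ne_zero.mpr (mt wt_eq_zero.mp hχ))
    (wt_single 1 (wt χ)).symm]
  refine congrArg _ (Finset.sum_congr rfl fun ψ hψ => ?_)
  rw [Finset.mem_erase, Finset.mem_Iic] at hψ
  exact hp.sum_Iic_single_one_eq hψ.2 hψ.1

lemma IsP.pOne_mem_degreeLE (hp : IsP v p) (χ : A →₀ ℕ) : pOne p χ ∈ degreeLE v (wt χ) := by
  induction hN : wt χ using Nat.strong_induction_on generalizing χ with
  | _ N ih =>
  obtain rfl | hχ := eq_or_ne χ 0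
  · rw [hp.pOne_zero]
    exact one_mem_degreeLE N
  rw [hp.pOne_eq_sum hχ]
  refine Submodule.smul_mem _ _ (Submodule.sum_mem _ fun ψ hψ => Submodule.smul_mem _ _ ?_)
  rw [Finset.mem_erase, Finset.mem_Iic] at hψ
  have hpos : wt ψ ≠ 0 := mt wt_eq_zero.mp hψ.1
  have hle : wt ψ ≤ N := hN ▸ wt_mono hψ.2
  have hwt : wt (χ - ψ) = N - wt ψ := by rw [wt_tsub hψ.2, hN]
  refine degreeLE_mono ?_ (mul_mem_degreeLE (el_mem_degreeLE_one _) (ih _ ?_ (χ - ψ) hwt))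
  all_goals omega

lemma IsP.summand_mem_degreeLT (hp : IsP v p) {χ ψ : A →₀ ℕ} (hψ : ψ ≤ χ) (hψ2 : 2 ≤ wt ψ) :
    (mF ψ : ℂ) • (el (piF ψ) v * pOne p (χ - ψ)) ∈ degreeLT v (wt χ) := by
  have hle : wt ψ ≤ wt χ := wt_mono hψ
  refine Submodule.smul_mem _ _ (degreeLE_le_degreeLT ?_
    (mul_mem_degreeLE (el_mem_degreeLE_one _) (hp.pOne_mem_degreeLE (χ - ψ))))
  rw [wt_tsub hψ]
  omega

lemma IsP.sum_smodEq (hp : IsP v p) {χ : A →₀ ℕ} {M : ℕ} (hχ : wt χ = M + 1)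
    (ih : ∀ φ : A →₀ ℕ, wt φ = M → pOne p φ ≡ (-1 : ℂ) ^ M • xProd v φ [SMOD degreeLT v M]) :
    ∑ ψ ∈ (Finset.Iic χ).erase 0, (mF ψ : ℂ) • (el (piF ψ) v * pOne p (χ - ψ)) ≡
      ((-1 : ℂ) ^ M * (M + 1 : ℕ)) • xProd v χ [SMOD degreeLT v (M + 1)] := by
  have hlead : ∀ a ∈ χ.support,
      (mF (Finsupp.single a 1) : ℂ) •
          (el (piF (Finsupp.single a 1)) v * pOne p (χ - Finsupp.single a 1)) ≡
        ((-1 : ℂ) ^ M * χ a) • xProd v χ [SMOD degreeLT v (M + 1)] := by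
    intro a ha
    have hle : Finsupp.single a 1 ≤ χ :=
      Finsupp.single_le_iff.mpr (Nat.one_le_iff_ne_zero.mpr (Finsupp.mem_support_iff.mp ha))
    have hwt : wt (χ - Finsupp.single a 1) = M := by rw [wt_tsub hle, wt_single, hχ]; rfl
    rw [mF_single, piF_single, pow_one, Nat.cast_one, one_smul]
    have h := mul_smodEq_degreeLT (el_mem_degreeLE_one a) (ih _ hwt)
    rwa [mul_smul_comm, el_mul_xProd_tsub_single ha, smul_smul, add_comm] at h
  have hhigh : ∀ ψ ∈ ((Finset.Iic χ).erase 0).filter (¬ wt · = 1),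
      (mF ψ : ℂ) • (el (piF ψ) v * pOne p (χ - ψ)) ∈ degreeLT v (M + 1) := by
    intro ψ hψ
    simp only [Finset.mem_filter, Finset.mem_erase, Finset.mem_Iic] at hψ
    obtain ⟨⟨hψ0, hψle⟩, hψ1⟩ := hψ
    have hpos : wt ψ ≠ 0 := mt wt_eq_zero.mp hψ0
    exact hχ ▸ hp.summand_mem_degreeLT hψle (by omega)
  rw [← Finset.sum_filter_add_sum_filter_not _ (wt · = 1), sum_filter_wt_eq_one,
    ← add_zero (_ • xProd v χ)]
  refine SModEq.add ((SModEq.sum hlead).trans ?_) (SModEq.zero.mpr (Submodule.sum_mem _ hhigh))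
  rw [← Finset.sum_smul, ← Finset.mul_sum, ← Nat.cast_sum, ← Finsupp.degree_apply,
    ← wt_eq_degree, hχ]

theorem IsP.pOne_smodEq (hp : IsP v p) (χ : A →₀ ℕ) :
    pOne p χ ≡ (-1 : ℂ) ^ wt χ • xProd v χ [SMOD degreeLT v (wt χ)] := by
  induction hN : wt χ using Nat.strong_induction_on generalizing χ with
  | _ N ih =>
  obtain _ | M := N
  · rw [wt_eq_zero.mp hN, hp.pOne_zero, xProd_zero, pow_zero, one_smul]
  have hχ : χ ≠ 0 := by
    rintro rfl
    rw [wt_eq_zero.mpr rfl] at hN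
    exact M.succ_ne_zero hN.symm
  rw [hp.pOne_eq_sum hχ, hN]
  calc _ ≡ -((M + 1 : ℕ) : ℂ)⁻¹ • ((-1 : ℂ) ^ M * (M + 1 : ℕ)) • xProd v χ
        [SMOD degreeLT v (M + 1)] := (hp.sum_smodEq hN (ih M M.lt_succ_self)).smul _
    _ = (-1 : ℂ) ^ (M + 1) • xProd v χ := by
      rw [smul_smul]
      congr 1
      field_simp
      ring

end Recursion

/-- `p(χ) = (−1)^{|χ|} ∏_a (h⊗a)^{(χ(a))}` up to a `ℂ`-linear combination
of products of fewer than `|χ|` elements of `{h ⊗ a : a ∈ A}`. -/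
theorem p_leading_term (S : Sl2Data L)
    (p : (A →₀ ℕ) → (A →₀ ℕ) → UEA A L) (hp : IsP S.h p) (χ : A →₀ ℕ) :
    pOne p χ - ((-1 : ℂ) ^ wt χ) • xProd S.h χ ∈ Submodule.span ℂ
      {u : UEA A L | ∃ l : List A, l.length < wt χ ∧
        u = (l.map fun a => el a S.h).prod} :=
  SModEq.sub_mem.mp (hp.pOne_smodEq χ)

end MapAlgebra
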